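/- Let μ₀ be a probability measure on ℝ^d, σ_t ∈ (0,1) differentiable in t with β_t = 1 − σ_t, and φ_t(x) := ∫_{ℝ^d} ρ_{σ_t}(x − β_t y) μ₀(dy). Then φ_t solves the continuity equation ∂_t φ_t(x) = (log σ_t)' div((D_t(x) − x) φ_t(x)), where D_t(x) := ∫ y ρ_{σ_t}(x − β_t y) μ₀(dy) / ∫ ρ_{σ_t}(x − β_t y) μ₀(dy). -/

import Mathlib

open MeasureTheory Real
open scoped RealInnerProductSpace

noncomputable def gauss (d : ℕ) (σ : ℝ) (x : EuclideanSpace ℝ (Fin d)) : ℝ :=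
  (2 * π * σ ^ 2) ^ (-(d : ℝ) / 2) * Real.exp (-‖x‖ ^ 2 / (2 * σ ^ 2))

/-- `φ_t(x) = ∫ ρ_{σ_t}(x - β_t y) μ₀(dy)` with `β_t = 1 - σ_t`. -/
noncomputable def phi {d : ℕ} (μ₀ : Measure (EuclideanSpace ℝ (Fin d)))
    (σ : ℝ → ℝ) (t : ℝ) (x : EuclideanSpace ℝ (Fin d)) : ℝ :=
  ∫ y, gauss d (σ t) (x - (1 - σ t) • y) ∂μ₀

/-- `D_t(x) = ∫ y ρ_{σ_t}(x - β_t y) μ₀(dy) / ∫ ρ_{σ_t}(x - β_t y) μ₀(dy)`. -/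
noncomputable def driftD {d : ℕ} (μ₀ : Measure (EuclideanSpace ℝ (Fin d)))
    (σ : ℝ → ℝ) (t : ℝ) (x : EuclideanSpace ℝ (Fin d)) : EuclideanSpace ℝ (Fin d) :=
  (∫ y, gauss d (σ t) (x - (1 - σ t) • y) ∂μ₀)⁻¹ •
    ∫ y, gauss d (σ t) (x - (1 - σ t) • y) • y ∂μ₀

/-!
Write `k_a(x, y) = ρ_a(x - (1 - a) y)`. A direct computation gives
`a ∂ₐ k_a(x, y) = div_x (k_a(x, y) (y - x))`, the heat equation for `ρ` in disguise, and since
`φ_t > 0` the flux is `φ_t (D_t - x) = ∫ k_{σ_t}(x, y) (y - x) μ₀(dy)`. As `μ₀` has compact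
support, the integrands and their derivatives are continuous on compact sets, so both derivatives
pass under the integral; the chain rule in `t` contributes the factor `σ'_t / σ_t`.
-/

open Topology

section CompactlySupported

variable {α : Type*} [TopologicalSpace α] [T2Space α] [MeasurableSpace α] [OpensMeasurableSpace α]
  {μ : Measure α} [IsFiniteMeasure μ] {K : Set α}

theorem integrable_of_continuousOn_of_ae_mem_compact {E : Type*} [NormedAddCommGroup E]
    (hK : IsCompact K) (hμK : ∀ᵐ a ∂μ, a ∈ K) {f : α → E} (hf : ContinuousOn f K) :
    Integrable f μ := by
  simpa [IntegrableOn, Measure.restrict_eq_self_of_ae_mem hμK] using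
    hf.integrableOn_compact (μ := μ) hK

variable {𝕜 : Type*} [RCLike 𝕜] {E : Type*} [NormedAddCommGroup E] [NormedSpace ℝ E]
  [NormedSpace 𝕜 E] {H : Type*} [NormedAddCommGroup H] [NormedSpace 𝕜 H]

theorem hasFDerivAt_integral_of_continuousOn_of_ae_mem_compact (hK : IsCompact K)
    (hμK : ∀ᵐ a ∂μ, a ∈ K) {F : H → α → E} {F' : H → α → H →L[𝕜] E} {x₀ : H} {U : Set H}
    (hU : IsCompact U) (hUx₀ : U ∈ 𝓝 x₀) (hF : ∀ x ∈ U, ContinuousOn (F x) K)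
    (hF' : ContinuousOn (Function.uncurry F') (U ×ˢ K))
    (hdiff : ∀ x ∈ U, ∀ a ∈ K, HasFDerivAt (F · a) (F' x a) x) :
    HasFDerivAt (fun x ↦ ∫ a, F x a ∂μ) (∫ a, F' x₀ a ∂μ) x₀ := by
  obtain ⟨C, hC⟩ := (hU.prod hK).exists_bound_of_continuousOn hF'
  have hF'x₀ : ContinuousOn (F' x₀) K :=
    hF'.comp (Continuous.prodMk_right x₀).continuousOn
      fun a ha ↦ ⟨mem_of_mem_nhds hUx₀, ha⟩
  refine hasFDerivAt_integral_of_dominated_of_fderiv_le (bound := fun _ ↦ C) hUx₀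
    (Filter.eventually_of_mem hUx₀ fun x hx ↦
      (integrable_of_continuousOn_of_ae_mem_compact hK hμK (hF x hx)).aestronglyMeasurable)
    (integrable_of_continuousOn_of_ae_mem_compact hK hμK (hF x₀ (mem_of_mem_nhds hUx₀)))
    (integrable_of_continuousOn_of_ae_mem_compact hK hμK hF'x₀).aestronglyMeasurable
    ?_ (integrable_const C) ?_
  · filter_upwards [hμK] with a ha x hx using hC (x, a) ⟨hx, ha⟩
  · filter_upwards [hμK] with a ha x hx using hdiff x hx a ha

theorem hasDerivAt_integral_of_continuousOn_of_ae_mem_compact (hK : IsCompact K)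
    (hμK : ∀ᵐ a ∂μ, a ∈ K) {F F' : 𝕜 → α → E} {x₀ : 𝕜} {U : Set 𝕜}
    (hU : IsCompact U) (hUx₀ : U ∈ 𝓝 x₀) (hF : ∀ x ∈ U, ContinuousOn (F x) K)
    (hF' : ContinuousOn (Function.uncurry F') (U ×ˢ K))
    (hdiff : ∀ x ∈ U, ∀ a ∈ K, HasDerivAt (F · a) (F' x a) x) :
    HasDerivAt (fun x ↦ ∫ a, F x a ∂μ) (∫ a, F' x₀ a ∂μ) x₀ := by
  obtain ⟨C, hC⟩ := (hU.prod hK).exists_bound_of_continuousOn hF'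
  have hF'x₀ : ContinuousOn (F' x₀) K :=
    hF'.comp (Continuous.prodMk_right x₀).continuousOn
      fun a ha ↦ ⟨mem_of_mem_nhds hUx₀, ha⟩
  refine (hasDerivAt_integral_of_dominated_loc_of_deriv_le (bound := fun _ ↦ C) hUx₀
    (Filter.eventually_of_mem hUx₀ fun x hx ↦
      (integrable_of_continuousOn_of_ae_mem_compact hK hμK (hF x hx)).aestronglyMeasurable)
    (integrable_of_continuousOn_of_ae_mem_compact hK hμK (hF x₀ (mem_of_mem_nhds hUx₀)))
    (integrable_of_continuousOn_of_ae_mem_compact hK hμK hF'x₀).aestronglyMeasurable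
    ?_ (integrable_const C) ?_).2
  · filter_upwards [hμK] with a ha x hx using hC (x, a) ⟨hx, ha⟩
  · filter_upwards [hμK] with a ha x hx using hdiff x hx a ha

end CompactlySupported

theorem LinearMap.trace_integral {α : Type*} [MeasurableSpace α] {μ : Measure α}
    {E : Type*} [NormedAddCommGroup E] [NormedSpace ℝ E] [FiniteDimensional ℝ E]
    {L : α → E →L[ℝ] E} (hL : Integrable L μ) :
    LinearMap.trace ℝ E (∫ a, L a ∂μ : E →L[ℝ] E) = ∫ a, LinearMap.trace ℝ E (L a) ∂μ :=
  (LinearMap.toContinuousLinearMap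
    (LinearMap.trace ℝ E ∘ₗ ContinuousLinearMap.coeLM ℝ)).integral_comp_comm hL |>.symm

section Gauss

variable {d : ℕ}
local notation "E" => EuclideanSpace ℝ (Fin d)

theorem sum_inner_single_eq_trace (L : E →L[ℝ] E) :
    ∑ i, ⟪L (EuclideanSpace.single i 1), EuclideanSpace.single i 1⟫ =
      LinearMap.trace ℝ E (L : E →ₗ[ℝ] E) := by
  rw [LinearMap.trace_eq_sum_inner _ (EuclideanSpace.basisFun (Fin d) ℝ)]
  simp [real_inner_comm]

theorem gauss_pos {a : ℝ} (ha : a ≠ 0) (x : E) : 0 < gauss d a x := by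
  unfold gauss
  have := pi_pos
  positivity

theorem continuous_gauss (a : ℝ) : Continuous (gauss d a) := by
  unfold gauss
  fun_prop

theorem continuousOn_gauss : ContinuousOn (fun p : ℝ × E ↦ gauss d p.1 p.2) {p | p.1 ≠ 0} := by
  unfold gauss
  have := pi_pos
  refine ContinuousOn.mul (ContinuousOn.rpow_const (by fun_prop) fun p hp ↦ Or.inl ?_) ?_
  · simp only [Set.mem_ofPred_eq] at hp; positivity
  · refine continuous_exp.comp_continuousOn (ContinuousOn.div (by fun_prop) (by fun_prop) ?_)
    intro p hp
    simp only [Set.mem_ofPred_eq] at hp; positivity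

theorem hasFDerivAt_gauss (a : ℝ) (z : E) :
    HasFDerivAt (gauss d a) ((-gauss d a z / a ^ 2) • innerSL ℝ z) z := by
  have h := (((hasFDerivAt_id z).inner ℝ (hasFDerivAt_id z)).const_mul
    (-(2 * a ^ 2)⁻¹)).exp.const_mul ((2 * π * a ^ 2) ^ (-(d : ℝ) / 2))
  have hfun : gauss d a = fun v ↦ (2 * π * a ^ 2) ^ (-(d : ℝ) / 2) *
      exp (-(2 * a ^ 2)⁻¹ * ⟪id v, id v⟫) := by
    ext v
    simp only [gauss, id, real_inner_self_eq_norm_sq]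
    ring_nf
  rw [hfun]
  refine h.congr_fderiv (ContinuousLinearMap.ext fun v ↦ ?_)
  simp only [id_eq, real_inner_self_eq_norm_sq, neg_mul, neg_smul, neg_apply,
    smul_apply, ContinuousLinearMap.comp_apply, ContinuousLinearMap.prod_apply,
    ContinuousLinearMap.id_apply, fderivInnerCLM_apply, real_inner_comm, smul_eq_mul,
    innerSL_apply_apply]
  ring

theorem hasDerivAt_gauss_param (x y : E) {a : ℝ} (ha : a ≠ 0) :
    HasDerivAt (fun u ↦ gauss d u (x - (1 - u) • y))
      (gauss d a (x - (1 - a) • y) *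
        (‖x - (1 - a) • y‖ ^ 2 / a ^ 2 - ⟪x - (1 - a) • y, y⟫ / a - d) / a) a := by
  have := pi_pos
  have hz : HasDerivAt (fun u : ℝ ↦ x - (1 - u) • y) y a := by
    simpa using ((hasDerivAt_id a).const_sub 1).smul_const y |>.const_sub x
  have hpre : HasDerivAt (fun u : ℝ ↦ (2 * π * u ^ 2) ^ (-(d : ℝ) / 2))
      (2 * π * (2 * a) * (-(d : ℝ) / 2) * (2 * π * a ^ 2) ^ (-(d : ℝ) / 2 - 1)) a := by
    refine HasDerivAt.rpow_const ?_ (Or.inl (by positivity))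
    simpa [mul_assoc] using (hasDerivAt_pow 2 a).const_mul (2 * π)
  have hexp := ((hz.norm_sq).neg.div ((hasDerivAt_pow 2 a).const_mul 2) (by positivity)).exp
  refine (hpre.mul hexp).congr_deriv ?_
  rw [rpow_sub_one (by positivity)]
  simp only [gauss, Pi.div_apply, Pi.neg_apply]
  field_simp
  ring

theorem hasFDerivAt_gauss_sub_smul (a : ℝ) (c y w : E) :
    HasFDerivAt (fun v ↦ gauss d a (v - c) • (y - v))
      (((-gauss d a (w - c) / a ^ 2) • innerSL ℝ (w - c)).smulRight (y - w)
        - gauss d a (w - c) • ContinuousLinearMap.id ℝ E) w := by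
  refine (((hasFDerivAt_gauss a (w - c)).comp w ((hasFDerivAt_id w).sub_const c)).smul
    ((hasFDerivAt_id w).const_sub y)).congr_fderiv (ContinuousLinearMap.ext fun v ↦ ?_)
  simp only [id_eq, Function.comp_apply, add_apply, sub_apply,
    smul_apply, neg_apply, ContinuousLinearMap.comp_apply,
    ContinuousLinearMap.id_apply, ContinuousLinearMap.smulRight_apply, innerSL_apply_apply,
    smul_eq_mul]
  module

theorem continuous_gauss_sub_smul_fderiv (a : ℝ) (c : E → E) (hc : Continuous c) :
    Continuous fun p : E × E ↦
      ((-gauss d a (p.1 - c p.2) / a ^ 2) • innerSL ℝ (p.1 - c p.2)).smulRight (p.2 - p.1)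
        - gauss d a (p.1 - c p.2) • ContinuousLinearMap.id ℝ E := by
  have := continuous_gauss (d := d) a
  fun_prop

/-- Compared with `hasDerivAt_gauss_param`, this is `div_w (k (y - w)) = a ∂ₐ k` for the kernel
`k = gauss d a (w - (1 - a) • y)`. -/
theorem trace_gauss_sub_smul_fderiv {a : ℝ} (ha : a ≠ 0) (y w : E) :
    LinearMap.trace ℝ E
      ((((-gauss d a (w - (1 - a) • y) / a ^ 2) • innerSL ℝ (w - (1 - a) • y)).smulRight (y - w)
        - gauss d a (w - (1 - a) • y) • ContinuousLinearMap.id ℝ E : E →L[ℝ] E) : E →ₗ[ℝ] E)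
      = gauss d a (w - (1 - a) • y) *
        (‖w - (1 - a) • y‖ ^ 2 / a ^ 2 - ⟪w - (1 - a) • y, y⟫ / a - d) := by
  set z := w - (1 - a) • y
  have hyw : y - w = a • y - z := by simp only [z, sub_smul, one_smul]; abel
  simp only [hyw, ContinuousLinearMap.toLinearMap_sub, ContinuousLinearMap.coe_smulRight,
    ContinuousLinearMap.toLinearMap_smul, ContinuousLinearMap.toLinearMap_innerSL_apply,
    ContinuousLinearMap.coe_id, map_sub, map_smul, LinearMap.trace_smulRight, LinearMap.trace_id,
    LinearMap.smul_apply, innerₛₗ_apply_apply, real_inner_self_eq_norm_sq, smul_eq_mul,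
    finrank_euclideanSpace, Fintype.card_fin]
  field_simp
  ring

end Gauss

section Kernel

variable {d : ℕ} {μ : Measure (EuclideanSpace ℝ (Fin d))} [IsFiniteMeasure μ]
  {K : Set (EuclideanSpace ℝ (Fin d))} (hK : IsCompact K) (hμK : ∀ᵐ y ∂μ, y ∈ K)
include hK hμK
local notation "E" => EuclideanSpace ℝ (Fin d)

theorem hasDerivAt_integral_gauss_param {a : ℝ} (ha : a ≠ 0) (x : E) :
    HasDerivAt (fun u ↦ ∫ y, gauss d u (x - (1 - u) • y) ∂μ)
      (∫ y, gauss d a (x - (1 - a) • y) *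
        (‖x - (1 - a) • y‖ ^ 2 / a ^ 2 - ⟪x - (1 - a) • y, y⟫ / a - d) / a ∂μ) a := by
  have hU : ∀ u ∈ Metric.closedBall a (|a| / 2), u ≠ 0 := by
    intro u hu h0
    rw [Metric.mem_closedBall, h0, dist_zero_left, norm_eq_abs] at hu
    linarith [abs_pos.mpr ha]
  refine hasDerivAt_integral_of_continuousOn_of_ae_mem_compact hK hμK (isCompact_closedBall _ _)
    (Metric.closedBall_mem_nhds a (by positivity))
    (fun u _ ↦ ((continuous_gauss u).comp (by fun_prop)).continuousOn) ?_
    fun u hu y _ ↦ hasDerivAt_gauss_param x y (hU u hu)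
  set S := Metric.closedBall a (|a| / 2) ×ˢ K
  have hS : ∀ p ∈ S, p.1 ≠ 0 := fun p hp ↦ hU p.1 hp.1
  have hg : ContinuousOn (fun p : ℝ × E ↦ gauss d p.1 (x - (1 - p.1) • p.2)) S :=
    continuousOn_gauss.comp (f := fun p : ℝ × E ↦ (p.1, x - (1 - p.1) • p.2)) (by fun_prop) hS
  have hq : ContinuousOn (fun p : ℝ × E ↦ ‖x - (1 - p.1) • p.2‖ ^ 2 / p.1 ^ 2
      - ⟪x - (1 - p.1) • p.2, p.2⟫ / p.1 - d) S := by
    fun_prop (disch := first | exact fun p hp ↦ pow_ne_zero 2 (hS p hp) | exact hS)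
  exact (hg.mul hq).div (by fun_prop) hS

theorem hasFDerivAt_integral_gauss_sub_smul (a : ℝ) (x : E) :
    HasFDerivAt (fun w ↦ ∫ y, gauss d a (w - (1 - a) • y) • (y - w) ∂μ)
      (∫ y, ((-gauss d a (x - (1 - a) • y) / a ^ 2) • innerSL ℝ (x - (1 - a) • y)).smulRight
        (y - x) - gauss d a (x - (1 - a) • y) • ContinuousLinearMap.id ℝ E ∂μ) x :=
  hasFDerivAt_integral_of_continuousOn_of_ae_mem_compact hK hμK (isCompact_closedBall x 1)
    (Metric.closedBall_mem_nhds x one_pos)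
    (fun w _ ↦ (((continuous_gauss a).comp (by fun_prop)).smul (by fun_prop)).continuousOn)
    (continuous_gauss_sub_smul_fderiv a _ (by fun_prop)).continuousOn
    fun w _ y _ ↦ hasFDerivAt_gauss_sub_smul a _ y w

theorem phi_pos [NeZero μ] {σ : ℝ → ℝ} {t : ℝ} (hσ : σ t ≠ 0) (x : E) : 0 < phi μ σ t x := by
  have hint : Integrable (fun y ↦ gauss d (σ t) (x - (1 - σ t) • y)) μ :=
    integrable_of_continuousOn_of_ae_mem_compact hK hμK
      ((continuous_gauss _).comp (by fun_prop)).continuousOn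
  rw [phi, integral_pos_iff_support_of_nonneg (fun y ↦ (gauss_pos hσ _).le) hint,
    Function.support_eq_univ fun y ↦ (gauss_pos hσ _).ne']
  exact Measure.measure_univ_pos.mpr (NeZero.ne μ)

theorem phi_smul_driftD_sub [NeZero μ] {σ : ℝ → ℝ} {t : ℝ} (hσ : σ t ≠ 0) (x : E) :
    phi μ σ t x • (driftD μ σ t x - x) = ∫ y, gauss d (σ t) (x - (1 - σ t) • y) • (y - x) ∂μ := by
  have hg : Continuous fun y ↦ gauss d (σ t) (x - (1 - σ t) • y) :=
    (continuous_gauss _).comp (by fun_prop)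
  have hgy : Integrable (fun y ↦ gauss d (σ t) (x - (1 - σ t) • y) • y) μ :=
    integrable_of_continuousOn_of_ae_mem_compact hK hμK (hg.smul continuous_id).continuousOn
  have hgx : Integrable (fun y ↦ gauss d (σ t) (x - (1 - σ t) • y) • x) μ :=
    integrable_of_continuousOn_of_ae_mem_compact hK hμK (hg.smul continuous_const).continuousOn
  simp_rw [smul_sub]
  rw [integral_sub hgy hgx, integral_smul_const, driftD, smul_smul, ← phi,
    mul_inv_cancel₀ (phi_pos hK hμK hσ x).ne', one_smul]

theorem trace_fderiv_integral_gauss_sub_smul {a : ℝ} (ha : a ≠ 0) (x : E) :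
    LinearMap.trace ℝ E
      (fderiv ℝ (fun w ↦ ∫ y, gauss d a (w - (1 - a) • y) • (y - w) ∂μ) x : E →ₗ[ℝ] E)
      = ∫ y, gauss d a (x - (1 - a) • y) *
        (‖x - (1 - a) • y‖ ^ 2 / a ^ 2 - ⟪x - (1 - a) • y, y⟫ / a - d) ∂μ := by
  have hL := integrable_of_continuousOn_of_ae_mem_compact hK hμK
    ((continuous_gauss_sub_smul_fderiv a (fun y ↦ (1 - a) • y) (by fun_prop)).comp
      (Continuous.prodMk_right x)).continuousOn
  rw [(hasFDerivAt_integral_gauss_sub_smul hK hμK a x).fderiv]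
  exact (LinearMap.trace_integral hL).trans
    (integral_congr_ae (.of_forall fun y ↦ trace_gauss_sub_smul_fderiv ha y x))

end Kernel

theorem phi_solves_continuity_equation_general {d : ℕ}
    (μ₀ : Measure (EuclideanSpace ℝ (Fin d))) [IsProbabilityMeasure μ₀]
    (K : ℝ) (hsupp : μ₀ {x | ‖x‖ ≤ K}ᶜ = 0)
    (T : ℝ) (σ σ' : ℝ → ℝ)
    (hderiv : ∀ t ∈ Set.Ioo (0:ℝ) T, HasDerivAt σ (σ' t) t)
    (hσmem : ∀ t ∈ Set.Ioo (0:ℝ) T, σ t ∈ Set.Ioo (0:ℝ) 1) :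
    ∀ t ∈ Set.Ioo (0:ℝ) T, ∀ x : EuclideanSpace ℝ (Fin d),
      HasDerivAt (fun s => phi μ₀ σ s x)
        ((σ' t / σ t) *
          ∑ i : Fin d,
            ⟪fderiv ℝ (fun y => phi μ₀ σ t y • (driftD μ₀ σ t y - y)) x
                (EuclideanSpace.single i 1),
              EuclideanSpace.single i 1⟫) t := by
  intro t ht x
  have hσ : σ t ≠ 0 := (hσmem t ht).1.ne'
  have hK := isCompact_closedBall (0 : EuclideanSpace ℝ (Fin d)) K
  have hμK : ∀ᵐ y ∂μ₀, y ∈ Metric.closedBall 0 K := by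
    simpa [ae_iff, Set.compl_ofPred] using hsupp
  have hfield : (fun w ↦ phi μ₀ σ t w • (driftD μ₀ σ t w - w)) =
      fun w ↦ ∫ y, gauss d (σ t) (w - (1 - σ t) • y) • (y - w) ∂μ₀ :=
    funext (phi_smul_driftD_sub hK hμK hσ)
  rw [sum_inner_single_eq_trace, hfield, trace_fderiv_integral_gauss_sub_smul hK hμK hσ]
  refine ((hasDerivAt_integral_gauss_param hK hμK hσ x).comp t (hderiv t ht)).congr_deriv ?_
  rw [integral_div]
  ring

/-- The continuity equation `∂_t φ_t = (log σ_t)' div((D_t - x) φ_t)`, where the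
divergence of a vector field `F` at `x` is `∑ i ⟪DF(x) eᵢ, eᵢ⟫`. -/
theorem phi_solves_continuity_equation {d : ℕ}
    (μ₀ : Measure (EuclideanSpace ℝ (Fin d))) [IsProbabilityMeasure μ₀]
    (K : ℝ) (hsupp : μ₀ {x | ‖x‖ ≤ K}ᶜ = 0)
    (T : ℝ) (hT : 0 < T) (σ σ' : ℝ → ℝ)
    (hderiv : ∀ t ∈ Set.Ioo (0:ℝ) T, HasDerivAt σ (σ' t) t)
    (hσmem : ∀ t ∈ Set.Ioo (0:ℝ) T, σ t ∈ Set.Ioo (0:ℝ) 1) :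
    ∀ t ∈ Set.Ioo (0:ℝ) T, ∀ x : EuclideanSpace ℝ (Fin d),
      HasDerivAt (fun s => phi μ₀ σ s x)
        ((σ' t / σ t) *
          ∑ i : Fin d,
            ⟪fderiv ℝ (fun y => phi μ₀ σ t y • (driftD μ₀ σ t y - y)) x
                (EuclideanSpace.single i 1),
              EuclideanSpace.single i 1⟫) t :=
  phi_solves_continuity_equation_general μ₀ K hsupp T σ σ' hderiv hσmem
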